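/- Let G be a commutative grammar in normal form with N nonterminals. Every skeleton run R (a run from q₀ that cannot be written as R₀ + C with C a nonzero cycle and supp(R) = supp(R₀)) satisfies |R| < γ(N²), where γ(M) = M+1 if G is regular and 2^{M+1} otherwise. -/

import Mathlib

structure CTrans (S Q : Type) where
  src : Q
  out : S → ℤ
  tgt : Q → ℕ

instance {S Q : Type} [Fintype S] [Fintype Q] [DecidableEq S] [DecidableEq Q] :
    DecidableEq (CTrans S Q) := fun a b =>
  decidable_of_iff (a.src = b.src ∧ a.out = b.out ∧ a.tgt = b.tgt) (by
    cases a; cases b; simp)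

structure CGrammar (S Q : Type) [Fintype S] [Fintype Q] [DecidableEq S] [DecidableEq Q] where
  q0 : Q
  delta : Finset (CTrans S Q)

namespace CGrammar

variable {S Q : Type} [Fintype S] [Fintype Q] [DecidableEq S] [DecidableEq Q]

def srcCount (g : CGrammar S Q) (R : CTrans S Q → ℕ) (q : Q) : ℕ :=
  ∑ d ∈ g.delta, if d.src = q then R d else 0

def tgtCount (g : CGrammar S Q) (R : CTrans S Q → ℕ) (q : Q) : ℕ :=
  ∑ d ∈ g.delta, R d * d.tgt q

def parikh (g : CGrammar S Q) (R : CTrans S Q → ℕ) (a : S) : ℤ :=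
  ∑ d ∈ g.delta, (R d : ℤ) * d.out a

def Step (g : CGrammar S Q) (R : CTrans S Q → ℕ) (p q : Q) : Prop :=
  ∃ d ∈ g.delta, 0 < R d ∧ d.src = p ∧ 0 < d.tgt q

def ind (p : Q) : Q → ℕ := fun q => if q = p then 1 else 0

/-- `R` is a commutative subrun from `s` to `t`: support in `delta`,
Euler condition, and connectivity from `s`. -/
def IsSubrun (g : CGrammar S Q) (R : CTrans S Q → ℕ) (s t : Q → ℕ) : Prop :=
  (∀ d, 0 < R d → d ∈ g.delta) ∧
  (∀ q, (g.srcCount R q : ℤ) - (s q : ℤ) = (g.tgtCount R q : ℤ) - (t q : ℤ)) ∧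
  (∀ q, 0 < g.srcCount R q → ∃ p, 0 < s p ∧ Relation.ReflTransGen (g.Step R) p q)

def IsRun (g : CGrammar S Q) (R : CTrans S Q → ℕ) (p : Q) : Prop :=
  g.IsSubrun R (ind p) 0

def IsCycle (g : CGrammar S Q) (R : CTrans S Q → ℕ) (p : Q) : Prop :=
  g.IsSubrun R (ind p) (ind p)

def size (g : CGrammar S Q) (R : CTrans S Q → ℕ) : ℕ := ∑ d ∈ g.delta, R d

def NormalForm (g : CGrammar S Q) : Prop :=
  ∀ d ∈ g.delta, (∑ q, d.tgt q) ≤ 2 ∧ (∑ a, |d.out a|) ≤ 1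

def Regular (g : CGrammar S Q) : Prop :=
  ∀ d ∈ g.delta, (∑ q, d.tgt q) ≤ 1 ∧ (∑ a, |d.out a|) ≤ 1

def Positive (g : CGrammar S Q) : Prop :=
  ∀ d ∈ g.delta, ∀ a, 0 ≤ d.out a

/-- A simple cycle: a cycle (from some nonterminal) that is not the sum of
two nonzero cycles. -/
def SimpleCycle (g : CGrammar S Q) (C : CTrans S Q → ℕ) : Prop :=
  (∃ p, g.IsCycle C p) ∧
  ¬ ∃ C₁ C₂ p₁ p₂, g.IsCycle C₁ p₁ ∧ g.IsCycle C₂ p₂ ∧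
      (∃ d, 0 < C₁ d) ∧ (∃ d, 0 < C₂ d) ∧ (∀ d, C d = C₁ d + C₂ d)

/-- The Parikh image of the grammar. -/
def PsiSet (g : CGrammar S Q) : Set (S → ℤ) :=
  {v | ∃ R, g.IsRun R g.q0 ∧ g.parikh R = v}

end CGrammar

open CGrammar

/-!
A run from `q₀` is the run of a parse tree: repeatedly removing a transition that fires from a
marked nonterminal without disconnecting the rest builds the tree top down. Descending from the
root into a child with the largest subtree gives a path of some length `L`; the tree has at most
`L` nodes if every node has at most one child (regular grammars) and fewer than `2 ^ L` if it has
at most two (normal form). Along this path the set made of the root of the current subtree and of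
the support of the run outside of it only grows. If `L > N ^ 2`, two subtrees on the path share
their root and this set; cutting out the part of the tree between them removes a cycle and keeps a
run with the same support, which a skeleton run does not allow.
-/

lemma Finset.exists_lt_eq_of_monotone {α : Type*} [Fintype α] {n : ℕ} (x : Fin n → α)
    (s : Fin n → Finset α) (hx : ∀ i, x i ∈ s i) (hs : Monotone s)
    (hn : Fintype.card α ^ 2 < n) : ∃ i j, i < j ∧ x i = x j ∧ s i = s j := by
  have hpos : ∀ i, 0 < (s i).card := fun i => Finset.card_pos.2 ⟨x i, hx i⟩
  have hlt : ∀ i, (s i).card - 1 < Fintype.card α := fun i => by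
    have := Finset.card_le_univ (s i)
    have := hpos i
    omega
  -- a chain of subsets is determined by the cardinalities of its members
  obtain ⟨i, j, hij, heq⟩ := Fintype.exists_ne_map_eq_of_card_lt
    (fun i => (x i, (⟨(s i).card - 1, hlt i⟩ : Fin (Fintype.card α))))
    (by simpa [Fintype.card_prod, sq] using hn)
  simp only [Prod.mk.injEq, Fin.mk.injEq] at heq
  have hcard : (s i).card = (s j).card := by
    have := hpos i
    have := hpos j
    omega
  rcases hij.lt_or_gt with h | h
  · exact ⟨i, j, h, heq.1, Finset.eq_of_subset_of_card_le (hs h.le) hcard.ge⟩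
  · exact ⟨j, i, h, heq.1.symm, Finset.eq_of_subset_of_card_le (hs h.le) hcard.le⟩

namespace CGrammar

open Relation

@[simp] lemma ind_self {Q : Type} [DecidableEq Q] (p : Q) : ind p p = 1 := if_pos rfl

lemma ind_of_ne {Q : Type} [DecidableEq Q] {p q : Q} (h : q ≠ p) : ind p q = 0 := if_neg h

lemma sum_ind {Q : Type} [Fintype Q] [DecidableEq Q] (p : Q) : ∑ q, ind p q = 1 := by simp [ind]

lemma sum_sum_map_ind {α : Type*} {Q : Type} [Fintype Q] [DecidableEq Q] (F : Multiset α)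
    (f : α → Q) :
    ∑ q, (F.map fun a => ind (f a)).sum q = Multiset.card F := by
  induction F using Multiset.induction_on with
  | empty => simp
  | cons a F ih => simp [Finset.sum_add_distrib, sum_ind, ih, add_comm]

lemma _root_.Multiset.exists_add_eq_of_le_sum_map_ind {α : Type*} {Q : Type} [DecidableEq Q]
    (F : Multiset α) (f : α → Q) {v : Q → ℕ} (hv : v ≤ (F.map fun a => ind (f a)).sum) :
    ∃ C D, F = C + D ∧ (C.map fun a => ind (f a)).sum = v := by
  induction F using Multiset.induction_on generalizing v with
  | empty => exact ⟨0, 0, rfl, funext fun q => (le_antisymm (hv q) (by simp)).symm⟩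
  | cons a F ih =>
    rw [Multiset.map_cons, Multiset.sum_cons] at hv
    by_cases ha : 0 < v (f a)
    · obtain ⟨C, D, rfl, hC⟩ := ih (v := v - ind (f a)) fun q => by
        have := hv q
        rcases eq_or_ne q (f a) with rfl | hq
        · simp only [Pi.add_apply, Pi.sub_apply, ind_self] at this ⊢
          omega
        · simpa [ind_of_ne hq] using this
      refine ⟨a ::ₘ C, D, (Multiset.cons_add _ _ _).symm, ?_⟩
      rw [Multiset.map_cons, Multiset.sum_cons, hC]
      ext q
      rcases eq_or_ne q (f a) with rfl | hq
      · simp only [Pi.add_apply, Pi.sub_apply, ind_self]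
        omega
      · simp [ind_of_ne hq]
    · obtain ⟨C, D, rfl, hC⟩ := ih (v := v) fun q => by
        have := hv q
        rcases eq_or_ne q (f a) with rfl | hq
        · simp_all
        · simpa [ind_of_ne hq] using this
      exact ⟨C, a ::ₘ D, (Multiset.add_cons _ _ _).symm, hC⟩

variable {S Q : Type} [Fintype S] [Fintype Q] [DecidableEq S] [DecidableEq Q]

section Counting

variable (g : CGrammar S Q)

lemma srcCount_add (f h : CTrans S Q → ℕ) (q : Q) :
    g.srcCount (f + h) q = g.srcCount f q + g.srcCount h q := by
  rw [srcCount, srcCount, srcCount, ← Finset.sum_add_distrib]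
  exact Finset.sum_congr rfl fun d _ => by split_ifs <;> simp

lemma tgtCount_add (f h : CTrans S Q → ℕ) (q : Q) :
    g.tgtCount (f + h) q = g.tgtCount f q + g.tgtCount h q := by
  simp only [tgtCount, Pi.add_apply, add_mul, Finset.sum_add_distrib]

lemma size_add (f h : CTrans S Q → ℕ) : g.size (f + h) = g.size f + g.size h :=
  Finset.sum_add_distrib

lemma srcCount_list_sum (l : List (CTrans S Q → ℕ)) (q : Q) :
    g.srcCount l.sum q = (l.map (g.srcCount · q)).sum := by
  induction l with
  | nil => simp [srcCount]
  | cons f l ih => simp [srcCount_add, ih]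

lemma tgtCount_list_sum (l : List (CTrans S Q → ℕ)) (q : Q) :
    g.tgtCount l.sum q = (l.map (g.tgtCount · q)).sum := by
  induction l with
  | nil => simp [tgtCount]
  | cons f l ih => simp [tgtCount_add, ih]

lemma size_list_sum (l : List (CTrans S Q → ℕ)) : g.size l.sum = (l.map g.size).sum := by
  induction l with
  | nil => simp [size]
  | cons f l ih => simp [size_add, ih]

lemma srcCount_sub_add {f R : CTrans S Q → ℕ} (h : f ≤ R) (q : Q) :
    g.srcCount (R - f) q + g.srcCount f q = g.srcCount R q := by
  rw [← srcCount_add, tsub_add_cancel_of_le h]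

lemma tgtCount_sub_add {f R : CTrans S Q → ℕ} (h : f ≤ R) (q : Q) :
    g.tgtCount (R - f) q + g.tgtCount f q = g.tgtCount R q := by
  rw [← tgtCount_add, tsub_add_cancel_of_le h]

variable {g}

lemma srcCount_single {d : CTrans S Q} (hd : d ∈ g.delta) (q : Q) :
    g.srcCount (Pi.single d 1) q = ind d.src q := by
  rw [srcCount, Finset.sum_eq_single_of_mem d hd fun e _ hed => by simp [hed]]
  simp [ind, eq_comm]

lemma tgtCount_single {d : CTrans S Q} (hd : d ∈ g.delta) (q : Q) :
    g.tgtCount (Pi.single d 1) q = d.tgt q := by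
  rw [tgtCount, Finset.sum_eq_single_of_mem d hd fun e _ hed => by simp [hed]]
  simp

lemma size_single {d : CTrans S Q} (hd : d ∈ g.delta) : g.size (Pi.single d 1) = 1 := by
  rw [size, Finset.sum_eq_single_of_mem d hd fun e _ hed => by simp [hed]]
  simp

lemma srcCount_mono {f h : CTrans S Q → ℕ} (hfh : f ≤ h) (q : Q) :
    g.srcCount f q ≤ g.srcCount h q :=
  Finset.sum_le_sum fun d _ => by split_ifs <;> simp [hfh d]

lemma srcCount_pos_iff {f : CTrans S Q → ℕ} {q : Q} :
    0 < g.srcCount f q ↔ ∃ d ∈ g.delta, 0 < f d ∧ d.src = q := by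
  simp [srcCount, Finset.sum_pos_iff, Nat.pos_iff_ne_zero, and_comm]

lemma tgtCount_pos_iff {f : CTrans S Q → ℕ} {q : Q} :
    0 < g.tgtCount f q ↔ ∃ d ∈ g.delta, 0 < f d ∧ 0 < d.tgt q := by
  simp [tgtCount, Finset.sum_pos_iff, Nat.pos_iff_ne_zero]

lemma size_pos_iff {f : CTrans S Q → ℕ} : 0 < g.size f ↔ ∃ d ∈ g.delta, 0 < f d :=
  Finset.sum_pos_iff

lemma step_mono {f h : CTrans S Q → ℕ} (hfh : f ≤ h) {p q : Q} (hs : g.Step f p q) :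
    g.Step h p q :=
  let ⟨d, hd, hfd, hsrc, htgt⟩ := hs
  ⟨d, hd, hfd.trans_le (hfh d), hsrc, htgt⟩

lemma reach_mono {f h : CTrans S Q → ℕ} (hfh : f ≤ h) {p q : Q}
    (hs : ReflTransGen (g.Step f) p q) : ReflTransGen (g.Step h) p q :=
  ReflTransGen.mono (fun _ _ => step_mono hfh) _ _ hs

lemma srcCount_pos_of_reach {R : CTrans S Q → ℕ} {a q : Q} (h : ReflTransGen (g.Step R) a q)
    (hq : 0 < g.srcCount R q) : 0 < g.srcCount R a := by
  rcases h.cases_head with rfl | ⟨c, ⟨e, he, hRe, hsrc, -⟩, -⟩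
  · exact hq
  · exact srcCount_pos_iff.2 ⟨e, he, hRe, hsrc⟩

lemma isSubrun_iff {R : CTrans S Q → ℕ} {s t : Q → ℕ} :
    g.IsSubrun R s t ↔ (∀ d, 0 < R d → d ∈ g.delta) ∧
      (∀ q, g.srcCount R q + t q = g.tgtCount R q + s q) ∧
      ∀ q, 0 < g.srcCount R q → ∃ p, 0 < s p ∧ ReflTransGen (g.Step R) p q :=
  and_congr_right' <| and_congr_left' <| forall_congr' fun q => by omega

def supp (g : CGrammar S Q) (R : CTrans S Q → ℕ) : Finset Q := {q | 0 < g.srcCount R q}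

lemma mem_supp {R : CTrans S Q → ℕ} {q : Q} : q ∈ g.supp R ↔ 0 < g.srcCount R q := by
  simp [supp]

lemma supp_mono {f h : CTrans S Q → ℕ} (hfh : f ≤ h) : g.supp f ⊆ g.supp h := fun q hq =>
  mem_supp.2 ((mem_supp.1 hq).trans_le (srcCount_mono hfh q))

/-- The cycles that a skeleton run `R` from `r` cannot contain. -/
def IsRemovableCycle (g : CGrammar S Q) (R C : CTrans S Q → ℕ) (p r : Q) : Prop :=
  g.IsCycle C p ∧ (∃ d, 0 < C d) ∧ (∀ d, C d ≤ R d) ∧ g.IsRun (fun d => R d - C d) r ∧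
    ∀ q, 0 < g.srcCount (fun d => R d - C d) q ↔ 0 < g.srcCount R q

end Counting

section RemoveTransition

variable {g : CGrammar S Q} {R : CTrans S Q → ℕ} {m : Q → ℕ} {d : CTrans S Q}

lemma single_le_of_pos (hRd : 0 < R d) : Pi.single d 1 ≤ R := by
  intro e
  rcases eq_or_ne e d with rfl | hed
  · simp only [Pi.single_eq_same]
    omega
  · simp [hed]

/-- A path that uses `d` can be restarted at a target of `d`. -/
lemma reach_sub_single_or (d : CTrans S Q) {w v : Q} (h : ReflTransGen (g.Step R) w v) :
    ReflTransGen (g.Step (R - Pi.single d 1)) w v ∨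
      ∃ x, 0 < d.tgt x ∧ ReflTransGen (g.Step (R - Pi.single d 1)) x v := by
  induction h with
  | refl => exact .inl .refl
  | tail _ hstep ih =>
    obtain ⟨e, he, hRe, rfl, htgt⟩ := hstep
    rcases eq_or_ne e d with rfl | hed
    · exact .inr ⟨_, htgt, .refl⟩
    · have hstep : g.Step (R - Pi.single d 1) e.src _ :=
        ⟨e, he, by simpa [hed] using hRe, rfl, htgt⟩
      exact ih.imp (·.tail hstep) fun ⟨x, hx, hxv⟩ => ⟨x, hx, hxv.tail hstep⟩

/-- Removing `d` can only disconnect what is reached from `d.src` once the last mark of `d.src`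
is used up; `hconn` rules this out. -/
lemma isSubrun_sub_single (hsub : g.IsSubrun R m 0) (hd : d ∈ g.delta) (hRd : 0 < R d)
    (hm : 0 < m d.src)
    (hconn : g.srcCount (R - Pi.single d 1) d.src = 0 ∨
      ∃ z, 0 < (m - ind d.src + d.tgt) z ∧ ReflTransGen (g.Step R) z d.src) :
    g.IsSubrun (R - Pi.single d 1) (m - ind d.src + d.tgt) 0 := by
  obtain ⟨hδ, heuler, hreach⟩ := isSubrun_iff.1 hsub
  have hind : ∀ q, ind d.src q ≤ m q := fun q => by
    rcases eq_or_ne q d.src with rfl | hq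
    · simp only [ind_self]
      omega
    · simp [ind_of_ne hq]
  refine isSubrun_iff.2
    ⟨fun e he => hδ e (he.trans_le tsub_le_self), fun q => ?_, fun v hv => ?_⟩
  · have hs := g.srcCount_sub_add (single_le_of_pos hRd) q
    have ht := g.tgtCount_sub_add (single_le_of_pos hRd) q
    rw [srcCount_single hd] at hs
    rw [tgtCount_single hd] at ht
    have := heuler q
    have := hind q
    simp only [Pi.add_apply, Pi.sub_apply, Pi.zero_apply] at *
    omega
  · have marked_of_tgt : ∀ x, 0 < d.tgt x → 0 < (m - ind d.src + d.tgt) x := fun x hx => by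
      simp only [Pi.add_apply]
      omega
    obtain ⟨a, ha, hav⟩ := hreach v (hv.trans_le (srcCount_mono tsub_le_self v))
    rcases reach_sub_single_or d hav with hav | ⟨x, hx, hxv⟩
    · rcases eq_or_ne a d.src with rfl | had
      · rcases hconn with hzero | ⟨z, hz, hzp⟩
        · exact absurd (srcCount_pos_of_reach hav hv) (by omega)
        · rcases reach_sub_single_or d hzp with hzp | ⟨x, hx, hxp⟩
          · exact ⟨z, hz, hzp.trans hav⟩
          · exact ⟨x, marked_of_tgt x hx, hxp.trans hav⟩
      · exact ⟨a, by simp only [Pi.add_apply, Pi.sub_apply, ind_of_ne had]; omega, hav⟩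
    · exact ⟨x, marked_of_tgt x hx, hxv⟩

lemma IsSubrun.exists_isSubrun_sub_single (hsub : g.IsSubrun R m 0)
    (hR : ∃ d ∈ g.delta, 0 < R d) :
    ∃ d ∈ g.delta, 0 < R d ∧ 0 < m d.src ∧
      g.IsSubrun (R - Pi.single d 1) (m - ind d.src + d.tgt) 0 := by
  obtain ⟨hδ, heuler, hreach⟩ := isSubrun_iff.1 hsub
  obtain ⟨p, hmp, hp⟩ : ∃ p, 0 < m p ∧ 0 < g.srcCount R p := by
    obtain ⟨d, hd, hRd⟩ := hR
    have hsrc : 0 < g.srcCount R d.src := srcCount_pos_iff.2 ⟨d, hd, hRd, rfl⟩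
    obtain ⟨a, ha, had⟩ := hreach d.src hsrc
    exact ⟨a, ha, srcCount_pos_of_reach had hsrc⟩
  obtain ⟨d₀, hd₀, hRd₀, hd₀p⟩ := srcCount_pos_iff.1 hp
  have hsplit := g.srcCount_sub_add (single_le_of_pos hRd₀) p
  rw [srcCount_single hd₀, hd₀p, ind_self] at hsplit
  by_cases hone : g.srcCount R p = 1
  · have hm₀ : 0 < m d₀.src := hd₀p ▸ hmp
    refine ⟨d₀, hd₀, hRd₀, hm₀, isSubrun_sub_single hsub hd₀ hRd₀ hm₀ (.inl ?_)⟩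
    rw [hd₀p]
    omega
  -- `p` has to stay reachable from a nonterminal that is still marked once `d` is removed
  suffices ∃ d ∈ g.delta, 0 < R d ∧ d.src = p ∧
      ∃ z, 0 < (m - ind p + d.tgt) z ∧ ReflTransGen (g.Step R) z p by
    obtain ⟨d, hd, hRd, rfl, hz⟩ := this
    exact ⟨d, hd, hRd, hmp, isSubrun_sub_single hsub hd hRd hmp (.inr hz)⟩
  by_cases hm2 : 2 ≤ m p
  · refine ⟨d₀, hd₀, hRd₀, hd₀p, p, ?_, .refl⟩
    simp only [Pi.add_apply, Pi.sub_apply, ind_self]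
    omega
  -- otherwise `m p = 1`, so by the Euler condition some transition enters `p`
  have htgt : 0 < g.tgtCount R p := by
    have := heuler p
    simp only [Pi.zero_apply] at this
    omega
  obtain ⟨e, he, hRe, hep⟩ := tgtCount_pos_iff.1 htgt
  obtain ⟨a, ha, hae⟩ := hreach e.src (srcCount_pos_iff.2 ⟨e, he, hRe, rfl⟩)
  obtain ⟨b, ⟨d, hd, hRd, rfl, hdb⟩, hbp⟩ :=
    TransGen.head'_iff.1 (.tail' hae ⟨e, he, hRe, rfl, hep⟩)
  by_cases hdp : d.src = p
  · exact ⟨d, hd, hRd, hdp, b, by simp only [Pi.add_apply]; omega, hbp⟩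
  · refine ⟨d₀, hd₀, hRd₀, hd₀p, d.src, ?_, hbp.head ⟨d, hd, hRd, rfl, hdb⟩⟩
    simp only [Pi.add_apply, Pi.sub_apply, ind_of_ne hdp]
    omega

end RemoveTransition

end CGrammar

/-- Nodes are labelled by transitions; `CGrammar.IsParseTree` asks the roots of the children of a
node to be the targets of its transition. -/
inductive ParseTree (S Q : Type) where
  | node (d : CTrans S Q) (children : List (ParseTree S Q))

namespace ParseTree

open Relation

variable {S Q : Type}

@[simp] def trans : ParseTree S Q → CTrans S Q
  | node d _ => d

@[simp] def children : ParseTree S Q → List (ParseTree S Q)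
  | node _ cs => cs

def root (T : ParseTree S Q) : Q := T.trans.src

def IsSubtree (T' T : ParseTree S Q) : Prop :=
  ReflTransGen (fun a b => b ∈ a.children) T T'

def IsProperSubtree (T' T : ParseTree S Q) : Prop :=
  TransGen (fun a b => b ∈ a.children) T T'

lemma IsProperSubtree.isSubtree {T' T : ParseTree S Q} (h : IsProperSubtree T' T) :
    IsSubtree T' T :=
  TransGen.to_reflTransGen h

variable [Fintype S] [Fintype Q] [DecidableEq S] [DecidableEq Q]

/-- The run of a parse tree: how many nodes carry each transition. -/
def count : ParseTree S Q → CTrans S Q → ℕ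
  | node d cs => Pi.single d 1 + (cs.map count).sum

lemma count_eq (T : ParseTree S Q) :
    T.count = Pi.single T.trans 1 + (T.children.map count).sum := by
  cases T
  rw [count]
  rfl

lemma count_add_single_le_of_mem {c T : ParseTree S Q} (h : c ∈ T.children) :
    c.count + Pi.single T.trans 1 ≤ T.count := by
  rw [count_eq T, add_comm]
  gcongr
  exact List.le_sum_of_mem (List.mem_map_of_mem h)

lemma IsSubtree.count_le {T' T : ParseTree S Q} (h : IsSubtree T' T) : T'.count ≤ T.count := by
  induction h with
  | refl => exact le_rfl
  | tail _ hc ih => exact le_self_add.trans ((count_add_single_le_of_mem hc).trans ih)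

lemma IsProperSubtree.count_add_single_le {T' T : ParseTree S Q} (h : IsProperSubtree T' T) :
    T'.count + Pi.single T.trans 1 ≤ T.count := by
  obtain ⟨c, hc, hsub⟩ := TransGen.head'_iff.1 h
  exact (add_le_add (IsSubtree.count_le hsub) le_rfl).trans (count_add_single_le_of_mem hc)

end ParseTree

namespace CGrammar

open Relation ParseTree

lemma tgt_root_pos {S Q : Type} [DecidableEq Q] {d : CTrans S Q} {cs : List (ParseTree S Q)}
    (htgt : d.tgt = (cs.map fun c => ind c.root).sum) {c : ParseTree S Q} (hc : c ∈ cs) :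
    0 < d.tgt c.root := by
  rw [htgt, Pi.list_sum_apply, List.map_map]
  calc 0 < ind c.root c.root := by simp
    _ ≤ _ := List.le_sum_of_mem (List.mem_map_of_mem (f := fun c' => ind c'.root c.root) hc)

variable {S Q : Type} [Fintype S] [Fintype Q] [DecidableEq S] [DecidableEq Q]

inductive IsParseTree (g : CGrammar S Q) : ParseTree S Q → Prop
  | node {d : CTrans S Q} {cs : List (ParseTree S Q)} : d ∈ g.delta →
      d.tgt = (cs.map fun c => ind c.root).sum → (∀ c ∈ cs, IsParseTree g c) →
      IsParseTree g (.node d cs)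

variable {g : CGrammar S Q} {R : CTrans S Q → ℕ}

lemma reach_of_node {d : CTrans S Q} (hd : d ∈ g.delta) {ts : List (ParseTree S Q)}
    (hts : ∀ t ∈ ts, 0 < d.tgt t.root ∧
      ∀ q, 0 < g.srcCount t.count q → ReflTransGen (g.Step t.count) t.root q)
    (hR : Pi.single d 1 + (ts.map count).sum ≤ R) {q : Q}
    (hq : 0 < g.srcCount (Pi.single d 1 + (ts.map count).sum) q) :
    ReflTransGen (g.Step R) d.src q := by
  rw [srcCount_add, srcCount_single hd, srcCount_list_sum, List.map_map] at hq
  rcases eq_or_ne q d.src with rfl | hqd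
  · exact .refl
  rw [ind_of_ne hqd, zero_add] at hq
  obtain ⟨_, htq, hpos⟩ := List.sum_pos_iff_exists_pos_nat.1 hq
  obtain ⟨t, ht, rfl⟩ := List.mem_map.1 htq
  have htR : t.count ≤ R :=
    (List.le_sum_of_mem (List.mem_map_of_mem ht)).trans (le_add_self.trans hR)
  have hdR : 0 < R d := by
    have := (le_self_add.trans hR) d
    simp only [Pi.single_eq_same] at this
    omega
  exact (reach_mono htR ((hts t ht).2 q hpos)).head ⟨d, hd, hdR, rfl, (hts t ht).1⟩

namespace IsParseTree

variable {T T' T₁ T₂ : ParseTree S Q}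

lemma trans_mem (hT : g.IsParseTree T) : T.trans ∈ g.delta := by
  cases hT with
  | node hd _ _ => exact hd

lemma tgt_eq (hT : g.IsParseTree T) :
    T.trans.tgt = (T.children.map fun c => ind c.root).sum := by
  cases hT with
  | node _ htgt _ => exact htgt

lemma of_mem_children (hT : g.IsParseTree T) {c : ParseTree S Q} (hc : c ∈ T.children) :
    g.IsParseTree c := by
  cases hT with
  | node _ _ hcs => exact hcs c hc

lemma of_isSubtree (hT : g.IsParseTree T) (h : IsSubtree T' T) : g.IsParseTree T' := by
  induction h with
  | refl => exact hT
  | tail _ hc ih => exact ih.of_mem_children hc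

lemma mem_delta (hT : g.IsParseTree T) {e : CTrans S Q} (he : 0 < T.count e) : e ∈ g.delta := by
  induction hT with
  | @node d cs hd _ _ ih =>
    rw [count, Pi.add_apply, Pi.list_sum_apply, List.map_map] at he
    rcases eq_or_ne e d with rfl | hed
    · exact hd
    rw [Pi.single_eq_of_ne hed, zero_add] at he
    obtain ⟨_, hce, hpos⟩ := List.sum_pos_iff_exists_pos_nat.1 he
    obtain ⟨c, hc, rfl⟩ := List.mem_map.1 hce
    exact ih c hc hpos

lemma srcCount_count (hT : g.IsParseTree T) (q : Q) :
    g.srcCount T.count q = ind T.root q + g.tgtCount T.count q := by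
  induction hT with
  | @node d cs hd htgt _ ih =>
    have hchildren : (cs.map fun c => g.srcCount c.count q).sum =
        (cs.map fun c => ind c.root q).sum + (cs.map fun c => g.tgtCount c.count q).sum := by
      rw [← List.sum_map_add]
      exact congrArg List.sum (List.map_congr_left fun c hc => ih c hc)
    rw [count, srcCount_add, tgtCount_add, srcCount_single hd, tgtCount_single hd,
      srcCount_list_sum, tgtCount_list_sum, List.map_map, List.map_map, htgt, Pi.list_sum_apply,
      List.map_map]
    simp only [Function.comp_def] at hchildren ⊢
    rw [hchildren]
    rfl

lemma srcCount_root_pos (hT : g.IsParseTree T) : 0 < g.srcCount T.count T.root := by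
  rw [hT.srcCount_count, ind_self]
  omega

lemma reach (hT : g.IsParseTree T) {q : Q} (hq : 0 < g.srcCount T.count q) :
    ReflTransGen (g.Step T.count) T.root q := by
  induction hT generalizing q with
  | @node d cs hd htgt _ ih =>
    exact reach_of_node hd (fun c hc => ⟨tgt_root_pos htgt hc, fun q => ih c hc⟩)
      (count.eq_1 d cs).ge (by rwa [count] at hq)

lemma reach_sub (hT : g.IsParseTree T) (hsub : IsSubtree T' T) {q : Q}
    (hq : 0 < g.srcCount (T.count - T'.count) q ∨ q = T'.root) :
    ReflTransGen (g.Step (T.count - T'.count)) T.root q := by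
  induction hsub using ReflTransGen.head_induction_on generalizing q with
  | refl =>
    rcases hq with hq | rfl
    · simp [srcCount] at hq
    · exact .refl
  | @head T c hc hsub ih =>
    obtain ⟨s, t, hst⟩ := List.append_of_mem hc
    have hsplit : T.count - T'.count =
        Pi.single T.trans 1 + ((s ++ t).map count).sum + (c.count - T'.count) := by
      have hcount : T.count = Pi.single T.trans 1 + ((s ++ t).map count).sum + c.count := by
        rw [count_eq T, hst]
        simp only [List.map_append, List.map_cons, List.sum_append, List.sum_cons]
        abel
      rw [hcount, add_tsub_assoc_of_le (IsSubtree.count_le hsub)]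
    have hd := hT.trans_mem
    have hstep : ∀ {c'}, c' ∈ T.children → g.Step (T.count - T'.count) T.root c'.root :=
      fun hc' => ⟨T.trans, hd, by rw [hsplit]; simp, rfl, tgt_root_pos hT.tgt_eq hc'⟩
    rw [hsplit, srcCount_add] at hq
    rcases hq with hq | hq
    · by_cases hrest : 0 < g.srcCount (c.count - T'.count) q
      · exact (reach_mono (hsplit ▸ le_add_self) (ih (hT.of_mem_children hc) (.inl hrest))).head
          (hstep hc)
      · have hsibling : ∀ t' ∈ s ++ t, t' ∈ T.children := fun t' ht' => by
          rw [List.mem_append] at ht'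
          rw [hst, List.mem_append, List.mem_cons]
          tauto
        exact reach_of_node hd (fun t' ht' => ⟨tgt_root_pos hT.tgt_eq (hsibling t' ht'),
          fun q => (hT.of_mem_children (hsibling t' ht')).reach⟩) (hsplit ▸ le_self_add)
          (by omega)
    · exact (reach_mono (hsplit ▸ le_add_self) (ih (hT.of_mem_children hc) (.inr hq))).head
        (hstep hc)

lemma size_count (hT : g.IsParseTree T) :
    g.size T.count = 1 + (T.children.map fun c => g.size c.count).sum := by
  rw [count_eq, size_add, size_single hT.trans_mem, size_list_sum, List.map_map]
  rfl

lemma length_children (hT : g.IsParseTree T) : T.children.length = ∑ q, T.trans.tgt q := by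
  rw [hT.tgt_eq, ← Multiset.coe_card, ← sum_sum_map_ind _ root]
  simp

lemma isCycle_sub (hT : g.IsParseTree T) (hsub : IsSubtree T₁ T) (hroot : T₁.root = T.root) :
    g.IsCycle (T.count - T₁.count) T.root := by
  have hle := hsub.count_le
  refine isSubrun_iff.2 ⟨fun e he => hT.mem_delta (he.trans_le tsub_le_self), fun q => ?_,
    fun q hq => ⟨T.root, by simp, hT.reach_sub hsub (.inl hq)⟩⟩
  have := g.srcCount_sub_add hle q
  have := g.tgtCount_sub_add hle q
  have := hT.srcCount_count q
  have := (hT.of_isSubtree hsub).srcCount_count q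
  rw [hroot] at this
  omega

lemma isRun_sub_add (hT : g.IsParseTree T) (h₁ : IsSubtree T₁ T) (h₂ : g.IsParseTree T₂)
    (hroot : T₂.root = T₁.root) : g.IsRun (T.count - T₁.count + T₂.count) T.root := by
  have hle := h₁.count_le
  refine isSubrun_iff.2 ⟨fun e he => ?_, fun q => ?_, fun q hq => ⟨T.root, by simp, ?_⟩⟩
  · rcases Nat.eq_zero_or_pos ((T.count - T₁.count) e) with h0 | h0
    · rw [Pi.add_apply, h0, zero_add] at he
      exact h₂.mem_delta he
    · exact hT.mem_delta (h0.trans_le tsub_le_self)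
  · have := g.srcCount_sub_add hle q
    have := g.tgtCount_sub_add hle q
    have := hT.srcCount_count q
    have := (hT.of_isSubtree h₁).srcCount_count q
    have := h₂.srcCount_count q
    rw [srcCount_add, tgtCount_add, Pi.zero_apply]
    rw [hroot] at this
    omega
  · rw [srcCount_add] at hq
    by_cases hcut : 0 < g.srcCount (T.count - T₁.count) q
    · exact reach_mono le_self_add (hT.reach_sub h₁ (.inl hcut))
    · refine (reach_mono le_self_add (hT.reach_sub h₁ (.inr rfl))).trans
        (reach_mono le_add_self ?_)
      rw [← hroot]
      exact h₂.reach (by omega)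

/-- Descend at each node into a child with the largest run. -/
lemma exists_heavy_path {k : ℕ} (hk : ∀ d ∈ g.delta, ∑ q, d.tgt q ≤ k)
    (hT : g.IsParseTree T) :
    ∃ l : List (ParseTree S Q), (T :: l).Pairwise (fun a b => IsProperSubtree b a) ∧
      g.size T.count ≤ ∑ i ∈ Finset.range (l.length + 1), k ^ i := by
  induction hT with
  | @node d cs hd htgt hcs ih =>
    have hT : g.IsParseTree (.node d cs) := .node hd htgt hcs
    obtain rfl | hne := eq_or_ne cs []
    · exact ⟨[], by simp, by simp [hT.size_count]⟩
    obtain ⟨c, hc, hmax⟩ := Multiset.exists_max_image (fun c : ParseTree S Q => g.size c.count)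
      (s := (cs : Multiset (ParseTree S Q))) (by simpa using hne)
    obtain ⟨l, hl, hsize⟩ := ih c hc
    refine ⟨c :: l, List.pairwise_cons.2 ⟨fun b hb => ?_, hl⟩, ?_⟩
    · rcases List.mem_cons.1 hb with rfl | hb
      · exact .single hc
      · exact .head hc ((List.pairwise_cons.1 hl).1 b hb)
    have hlen : cs.length ≤ k := hT.length_children ▸ hk d hd
    calc g.size (ParseTree.node d cs).count = 1 + (cs.map fun c => g.size c.count).sum :=
          hT.size_count
      _ ≤ 1 + k * g.size c.count := by
        have := List.sum_le_card_nsmul (cs.map fun c => g.size c.count) (g.size c.count)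
          (by simpa using hmax)
        rw [List.length_map, smul_eq_mul] at this
        have := Nat.mul_le_mul_right (g.size c.count) hlen
        omega
      _ ≤ 1 + k * ∑ i ∈ Finset.range (l.length + 1), k ^ i := by gcongr
      _ = ∑ i ∈ Finset.range ((c :: l).length + 1), k ^ i := by
        rw [List.length_cons, geom_sum_succ (n := l.length + 1)]
        ring

/-- The support survives since, by `hsupp`, every nonterminal firing between `T₂` and `T₁` also
fires outside of `T₁` or is their common root. -/
lemma isRemovableCycle_sub (hT : g.IsParseTree T) (h₁ : IsSubtree T₁ T)
    (h₂ : IsProperSubtree T₂ T₁) (hroot : T₂.root = T₁.root)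
    (hsupp : insert T₁.root (g.supp (T.count - T₁.count)) =
      insert T₂.root (g.supp (T.count - T₂.count))) :
    g.IsRemovableCycle T.count (T₁.count - T₂.count) T₁.root T.root := by
  have hT₁ := hT.of_isSubtree h₁
  have hT₂ := hT₁.of_isSubtree h₂.isSubtree
  have hle₁ := h₁.count_le
  have hsplit : T.count = T.count - T₁.count + T₂.count + (T₁.count - T₂.count) := by
    rw [add_assoc, add_tsub_cancel_of_le h₂.isSubtree.count_le, tsub_add_cancel_of_le hle₁]
  have hexcise :
      (fun d => T.count d - (T₁.count - T₂.count) d) = T.count - T₁.count + T₂.count :=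
    tsub_eq_of_eq_add hsplit
  refine ⟨hT₁.isCycle_sub h₂.isSubtree hroot, ⟨T₁.trans, ?_⟩, fun e => ?_,
    hexcise ▸ hT.isRun_sub_add h₁ hT₂ hroot, fun q => ?_⟩
  · have := h₂.count_add_single_le T₁.trans
    simp only [Pi.add_apply, Pi.single_eq_same] at this
    simp only [Pi.sub_apply]
    omega
  · exact tsub_le_self.trans (hle₁ e)
  rw [hexcise]
  refine ⟨fun hq => hq.trans_le (srcCount_mono (le_self_add.trans_eq hsplit.symm) q),
    fun hq => ?_⟩
  rw [hsplit, srcCount_add] at hq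
  by_contra hq'
  have hcut : q ∈ insert T₂.root (g.supp (T.count - T₂.count)) :=
    Finset.mem_insert_of_mem (supp_mono (tsub_le_tsub_right hle₁ _) (mem_supp.2 (by omega)))
  rcases Finset.mem_insert.1 (hsupp ▸ hcut) with rfl | hq₁
  · exact hq' ((hroot ▸ hT₂.srcCount_root_pos).trans_le (srcCount_mono le_add_self _))
  · exact hq' ((mem_supp.1 hq₁).trans_le (srcCount_mono le_self_add _))

/-- The sets `insert (t i).root (g.supp (T.count - (t i).count))` grow along the path, so among
more than `N ^ 2` of them two coincide and belong to subtrees with the same root. -/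
lemma exists_isRemovableCycle (hT : g.IsParseTree T) {l : List (ParseTree S Q)}
    (hl : (T :: l).Pairwise fun a b => IsProperSubtree b a)
    (hlen : Fintype.card Q ^ 2 < l.length + 1) :
    ∃ C p, g.IsRemovableCycle T.count C p T.root := by
  let t : Fin (T :: l).length → ParseTree S Q := fun i => (T :: l)[i]
  have hproper : ∀ i j, i < j → IsProperSubtree (t j) (t i) := fun i j hij =>
    List.pairwise_iff_getElem.1 hl i j i.2 j.2 hij
  have hsub : ∀ i j, i ≤ j → IsSubtree (t j) (t i) := fun i j hij =>
    hij.eq_or_lt.elim (fun h => h ▸ .refl) fun h => (hproper i j h).isSubtree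
  have htop : ∀ i, IsSubtree (t i) T := fun i => hsub ⟨0, by simp⟩ i (Nat.zero_le _)
  let s : Fin (T :: l).length → Finset Q :=
    fun i => insert (t i).root (g.supp (T.count - (t i).count))
  have hs : Monotone s := by
    intro i j hij
    rcases hij.eq_or_lt with rfl | hij
    · exact le_rfl
    refine Finset.insert_subset (Finset.mem_insert_of_mem (mem_supp.2 ?_)) fun q hq => ?_
    · refine srcCount_pos_iff.2 ⟨(t i).trans, (hT.of_isSubtree (htop i)).trans_mem, ?_, rfl⟩
      have := (hproper i j hij).count_add_single_le (t i).trans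
      have := (htop i).count_le (t i).trans
      simp only [Pi.add_apply, Pi.single_eq_same, Pi.sub_apply] at *
      omega
    · exact Finset.mem_insert_of_mem
        (supp_mono (tsub_le_tsub_left (hsub i j hij.le).count_le _) hq)
  obtain ⟨i, j, hij, hroot, hsupp⟩ := Finset.exists_lt_eq_of_monotone (fun i => (t i).root) s
    (fun i => Finset.mem_insert_self _ _) hs (by simpa using hlen)
  exact ⟨_, _, hT.isRemovableCycle_sub (htop i) (hproper i j hij) hroot.symm hsupp⟩

end IsParseTree

/-- Induction on the size: remove a first transition `d`, build the forest of the rest and put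
the trees rooted at the targets of `d` under a new node labelled `d`. -/
lemma IsSubrun.exists_forest {m : Q → ℕ} (h : g.IsSubrun R m 0) :
    ∃ F : Multiset (ParseTree S Q), (∀ T ∈ F, g.IsParseTree T) ∧
      (F.map fun T => ind T.root).sum = m ∧ (F.map count).sum = R := by
  obtain ⟨n, hn⟩ : ∃ n, g.size R = n := ⟨_, rfl⟩
  induction n generalizing R m with
  | zero =>
    obtain ⟨hδ, heuler, -⟩ := isSubrun_iff.1 h
    have hR : R = 0 := funext fun e => by
      by_contra he
      have := size_pos_iff.2 ⟨e, hδ e (Nat.pos_of_ne_zero he), Nat.pos_of_ne_zero he⟩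
      omega
    subst hR
    exact ⟨0, by simp, funext fun q => by simpa [srcCount, tgtCount] using heuler q, by simp⟩
  | succ n ih =>
    obtain ⟨d, hd, hRd, hm, hsub⟩ := h.exists_isSubrun_sub_single (size_pos_iff.1 (by omega))
    have hle := single_le_of_pos hRd
    have hsize : g.size (R - Pi.single d 1) = n := by
      have := g.size_add (R - Pi.single d 1) (Pi.single d 1)
      rw [tsub_add_cancel_of_le hle, size_single hd] at this
      omega
    obtain ⟨F, hF, hroots, hcount⟩ := ih hsub hsize
    obtain ⟨C, D, rfl, hC⟩ := Multiset.exists_add_eq_of_le_sum_map_ind F root (v := d.tgt)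
      (hroots ▸ le_add_self)
    have hnode : g.IsParseTree (.node d C.toList) := by
      refine .node hd ?_ fun c hc => hF c (Multiset.mem_add.2 (.inl (Multiset.mem_toList.1 hc)))
      rw [← hC, ← Multiset.sum_coe, ← Multiset.map_coe, Multiset.coe_toList]
    refine ⟨.node d C.toList ::ₘ D, ?_, ?_, ?_⟩
    · exact Multiset.forall_mem_cons.2 ⟨hnode, fun T hT => hF T (Multiset.mem_add.2 (.inr hT))⟩
    · rw [Multiset.map_add, Multiset.sum_add, hC] at hroots
      rw [Multiset.map_cons, Multiset.sum_cons]
      ext q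
      have := congrFun hroots q
      have hroot : (ParseTree.node d C.toList).root = d.src := rfl
      rcases eq_or_ne q d.src with rfl | hq
      · simp only [Pi.add_apply, Pi.sub_apply, hroot, ind_self] at this ⊢
        omega
      · simp only [Pi.add_apply, Pi.sub_apply, hroot, ind_of_ne hq] at this ⊢
        omega
    · rw [Multiset.map_cons, Multiset.sum_cons, count, ← Multiset.sum_coe, ← Multiset.map_coe,
        Multiset.coe_toList, add_assoc, ← Multiset.sum_add, ← Multiset.map_add, hcount,
        add_tsub_cancel_of_le hle]

lemma IsRun.exists_parseTree {p : Q} (h : g.IsRun R p) :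
    ∃ T, g.IsParseTree T ∧ T.root = p ∧ T.count = R := by
  obtain ⟨F, hF, hroots, hcount⟩ := IsSubrun.exists_forest h
  have hcard : Multiset.card F = 1 := by
    rw [← sum_sum_map_ind F root, hroots, sum_ind]
  obtain ⟨T, rfl⟩ := Multiset.card_eq_one.1 hcard
  simp only [Multiset.map_singleton, Multiset.sum_singleton] at hroots hcount
  refine ⟨T, hF T (Multiset.mem_singleton_self T), ?_, hcount⟩
  by_contra hne
  simpa [ind_of_ne (Ne.symm hne)] using congrFun hroots p

end CGrammar

/-- In a grammar in normal form with `N` nonterminals, every skeleton run `R`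
(a run from `q₀` from which no nonzero cycle can be removed while keeping a run
with the same support) satisfies `|R| < γ(N²)`, where `γ(M) = M + 1` if the
grammar is regular and `γ(M) = 2^(M+1)` otherwise. -/
theorem skeleton_run_size_lt {S Q : Type} [Fintype S] [Fintype Q]
    [DecidableEq S] [DecidableEq Q]
    (g : CGrammar S Q) (hg : g.NormalForm) (R : CTrans S Q → ℕ)
    (hR : g.IsRun R g.q0)
    (hskel : ¬ ∃ (C : CTrans S Q → ℕ) (p : Q),
      g.IsCycle C p ∧ (∃ d, 0 < C d) ∧ (∀ d, C d ≤ R d) ∧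
      g.IsRun (fun d => R d - C d) g.q0 ∧
      (∀ q, 0 < g.srcCount (fun d => R d - C d) q ↔ 0 < g.srcCount R q)) :
    (g.Regular → g.size R < Fintype.card Q ^ 2 + 1) ∧
    g.size R < 2 ^ (Fintype.card Q ^ 2 + 1) := by
  obtain ⟨T, hT, hroot, rfl⟩ := hR.exists_parseTree
  have hbound : ∀ k, (∀ d ∈ g.delta, ∑ q, d.tgt q ≤ k) →
      g.size T.count ≤ ∑ i ∈ Finset.range (Fintype.card Q ^ 2), k ^ i := by
    intro k hk
    obtain ⟨l, hl, hsize⟩ := hT.exists_heavy_path hk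
    have hlen : l.length + 1 ≤ Fintype.card Q ^ 2 := not_lt.1 fun hlen =>
      hskel (hroot ▸ hT.exists_isRemovableCycle hl hlen)
    exact hsize.trans (Finset.sum_le_sum_of_subset (Finset.range_mono hlen))
  refine ⟨fun hreg => ?_, ?_⟩
  · have := hbound 1 fun d hd => (hreg d hd).1
    simp only [one_pow, Finset.sum_const, Finset.card_range, smul_eq_mul, mul_one] at this
    omega
  · calc g.size T.count ≤ ∑ i ∈ Finset.range (Fintype.card Q ^ 2), 2 ^ i :=
          hbound 2 fun d hd => (hg d hd).1
      _ < 2 ^ (Fintype.card Q ^ 2) := Nat.geomSum_lt le_rfl fun i hi => Finset.mem_range.1 hi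
      _ < 2 ^ (Fintype.card Q ^ 2 + 1) := Nat.pow_lt_pow_right one_lt_two (by omega)
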